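/- arXiv:1810.02149 — 7 statements merged into one kernel-verified Lean document; each statement's English description precedes it below -/
import Mathlib

section
/- Let C, C' and C'' be filtered objects in a category 𝒞, let α be a translation function, and let G : C → C' and G' : C' → C'' be morphisms of filtered objects. Suppose that G'(t) : C'(t) → C''(t) is a monomorphism for every t ∈ [0,∞] and that the composition G'∘G : C → C'' is an α-interleaving. Then G' : C' → C'' is an α-interleaving. -/
open CategoryTheory
open scoped ENNReal

def IsInterleaving {𝒞 : Type*} [Category 𝒞] (α : ℝ≥0∞ → ℝ≥0∞)
    (hα : ∀ t, t ≤ α t) {C C' : ℝ≥0∞ ⥤ 𝒞} (G : C ⟶ C') : Prop :=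
  ∀ t : ℝ≥0∞, ∃ F : C'.obj t ⟶ C.obj (α t),
    G.app t ≫ F = C.map (homOfLE (hα t)) ∧
    F ≫ G.app (α t) = C'.map (homOfLE (hα t))

theorem NatTrans.app_comp_eq_map_of_comp_app_eq_map {J 𝒞 : Type*} [Category J] [Category 𝒞]
    {D D' : J ⥤ 𝒞} (η : D ⟶ D') {i j : J} (f : i ⟶ j) [Mono (η.app j)]
    {u : D'.obj i ⟶ D.obj j} (hu : u ≫ η.app j = D'.map f) :
    η.app i ≫ u = D.map f := by
  rw [← cancel_mono (η.app j), Category.assoc, hu, η.naturality]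

theorem isInterleaving_of_comp_mono_general {𝒞 : Type*} [Category 𝒞]
    (α : ℝ≥0∞ → ℝ≥0∞) (hα : ∀ t, t ≤ α t)
    {C C' C'' : ℝ≥0∞ ⥤ 𝒞} (G : C ⟶ C') (G' : C' ⟶ C'')
    (hG' : ∀ t : ℝ≥0∞, Mono (G'.app t))
    (h : IsInterleaving α hα (G ≫ G')) :
    IsInterleaving α hα G' := by
  intro t
  obtain ⟨F, -, hF⟩ := h t
  have hF' : (F ≫ G.app (α t)) ≫ G'.app (α t) = C''.map (homOfLE (hα t)) := by
    simpa only [Category.assoc, NatTrans.comp_app] using hF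
  have := hG' (α t)
  exact ⟨_, NatTrans.app_comp_eq_map_of_comp_app_eq_map G' _ hF', hF'⟩

/-- if `G'` is pointwise a monomorphism and `G ≫ G'` is an
`α`-interleaving, then `G'` is an `α`-interleaving. -/
theorem isInterleaving_of_comp_mono {𝒞 : Type*} [Category 𝒞]
    (α : ℝ≥0∞ → ℝ≥0∞) (hmono : Monotone α) (hα : ∀ t, t ≤ α t)
    {C C' C'' : ℝ≥0∞ ⥤ 𝒞} (G : C ⟶ C') (G' : C' ⟶ C'')
    (hG' : ∀ t : ℝ≥0∞, Mono (G'.app t))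
    (h : IsInterleaving α hα (G ≫ G')) :
    IsInterleaving α hα G' :=
  isInterleaving_of_comp_mono_general α hα G G' hG' h
end

section
/- Let Λ : L × W → [0,∞] be a dissimilarity, let α be a translation function, let T : L → [0,∞] be an α-truncation function for Λ, and let Γ be the T-truncation of Λ. Then for every t ∈ [0,∞] there exists a function f : L → L such that: (1) for every finite σ ⊆ L with σ ∈ NΛ_t, the image f(σ) belongs to NΓ_{α(t)} and the union σ ∪ f(σ) belongs to NΛ_{α(t)}; and (2) for every finite σ ⊆ L with σ ∈ NΓ_t, the union σ ∪ f(σ) belongs to NΓ_{α(t)}. -/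
open scoped ENNReal

/-- `σ` is a simplex of the Dowker nerve of `Λ` in filtration degree `t`. -/
def InNerve {L W : Type*} (Λ : L → W → ℝ≥0∞) (t : ℝ≥0∞) (σ : Finset L) : Prop :=
  ∃ w, ∀ l ∈ σ, Λ l w < t

/-- `T` is an `α`-truncation function for `Λ`. -/
def IsTruncation {L W : Type*} (Λ : L → W → ℝ≥0∞) (α : ℝ≥0∞ → ℝ≥0∞)
    (T : L → ℝ≥0∞) : Prop :=
  ∀ (t : ℝ≥0∞) (l : L), ∃ l', ∀ w, Λ l w < t → Λ l' w < α t ∧ Λ l' w < T l'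

/-- The `T`-truncation `Γ` of `Λ`. -/
noncomputable def truncation {L W : Type*} (Λ : L → W → ℝ≥0∞) (T : L → ℝ≥0∞) :
    L → W → ℝ≥0∞ :=
  fun l w => if Λ l w < T l then Λ l w else ⊤

/-!
Choosing, for each `l`, the vertex `l'` provided by the truncation property at level `t` gives
`f`. A witness `w` of `σ` at level `t` then witnesses `f(σ)` in `Γ` at level `α t`, and since
`Λ ≤ Γ` pointwise and `t ≤ α t`, the same `w` witnesses all the unions.
-/

section Nerve

variable {L W : Type*} [DecidableEq L] {Λ : L → W → ℝ≥0∞} {t : ℝ≥0∞}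

theorem inNerve_image_of_forall {f : L → L} {σ : Finset L} {w : W}
    (h : ∀ l ∈ σ, Λ (f l) w < t) : InNerve Λ t (σ.image f) :=
  ⟨w, by simpa only [Finset.forall_mem_image] using h⟩

theorem inNerve_union_image_of_forall {f : L → L} {σ : Finset L} {w : W}
    (h : ∀ l ∈ σ, Λ l w < t ∧ Λ (f l) w < t) : InNerve Λ t (σ ∪ σ.image f) :=
  ⟨w, by simpa only [Finset.forall_mem_union, Finset.forall_mem_image, forall_and] using h⟩

end Nerve

section Truncation

variable {L W : Type*} {Λ : L → W → ℝ≥0∞} {T : L → ℝ≥0∞}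

theorem le_truncation (l : L) (w : W) : Λ l w ≤ truncation Λ T l w := by
  unfold truncation
  split_ifs
  exacts [le_rfl, le_top]

theorem truncation_of_lt {l : L} {w : W} (h : Λ l w < T l) : truncation Λ T l w = Λ l w :=
  if_pos h

theorem IsTruncation.exists_truncation_lt {α : ℝ≥0∞ → ℝ≥0∞} (hT : IsTruncation Λ α T)
    (t : ℝ≥0∞) : ∃ f : L → L, ∀ l w, Λ l w < t → truncation Λ T (f l) w < α t := by
  choose f hf using hT t
  refine ⟨f, fun l w hlw => ?_⟩
  obtain ⟨hlt, hlt_T⟩ := hf l w hlw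
  rw [truncation_of_lt hlt_T]
  exact hlt

end Truncation

theorem truncation_interleaving_general {L W : Type*} [DecidableEq L]
    (Λ : L → W → ℝ≥0∞) (α : ℝ≥0∞ → ℝ≥0∞)
    (hα : ∀ t, t ≤ α t) (T : L → ℝ≥0∞) (hT : IsTruncation Λ α T)
    (t : ℝ≥0∞) :
    ∃ f : L → L,
      (∀ σ : Finset L, InNerve Λ t σ →
        InNerve (truncation Λ T) (α t) (σ.image f) ∧
          InNerve Λ (α t) (σ ∪ σ.image f)) ∧
      (∀ σ : Finset L, InNerve (truncation Λ T) t σ →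
        InNerve (truncation Λ T) (α t) (σ ∪ σ.image f)) := by
  obtain ⟨f, hf⟩ := hT.exists_truncation_lt t
  refine ⟨f, fun σ ⟨w, hw⟩ => ⟨?_, ?_⟩, fun σ ⟨w, hw⟩ => ?_⟩
  · exact inNerve_image_of_forall fun l hl => hf l w (hw l hl)
  · exact inNerve_union_image_of_forall fun l hl =>
      ⟨(hw l hl).trans_le (hα t), (le_truncation _ _).trans_lt (hf l w (hw l hl))⟩
  · exact inNerve_union_image_of_forall fun l hl =>
      ⟨(hw l hl).trans_le (hα t), hf l w ((le_truncation _ _).trans_lt (hw l hl))⟩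

/-- for every `t` there is a function `f : L → L` such that
(1) every simplex `σ` of `NΛ_t` has `f(σ) ∈ NΓ_{α t}` and
`σ ∪ f(σ) ∈ NΛ_{α t}`, and (2) every simplex `σ` of `NΓ_t` has
`σ ∪ f(σ) ∈ NΓ_{α t}`, where `Γ` is the `T`-truncation of `Λ`. -/
theorem truncation_interleaving {L W : Type*} [DecidableEq L]
    (Λ : L → W → ℝ≥0∞) (α : ℝ≥0∞ → ℝ≥0∞) (hmono : Monotone α)
    (hα : ∀ t, t ≤ α t) (T : L → ℝ≥0∞) (hT : IsTruncation Λ α T)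
    (t : ℝ≥0∞) :
    ∃ f : L → L,
      (∀ σ : Finset L, InNerve Λ t σ →
        InNerve (truncation Λ T) (α t) (σ.image f) ∧
          InNerve Λ (α t) (σ ∪ σ.image f)) ∧
      (∀ σ : Finset L, InNerve (truncation Λ T) t σ →
        InNerve (truncation Λ T) (α t) (σ ∪ σ.image f)) :=
  truncation_interleaving_general Λ α hα T hT t
end

section
/- Let Λ : L × W → [0,∞] be a dissimilarity with L finite, let α be a translation function, and let < be a total order on L with minimal element l_0. Then the α-insertion radius λ^α : L → [0,∞] is an α-truncation function for Λ: for all t ∈ [0,∞] and all l ∈ L there exists l' ∈ L so that for all w ∈ W with Λ(l,w) < t one has Λ(l',w) < α(t) and Λ(l',w) < λ^α(l'). -/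
open scoped ENNReal Classical

/-- The cover dissimilarity `Λ^α : L × L → [0,∞]` for `Λ` with respect to
the translation function `α` and the base point `l₀`. -/
noncomputable def coverDiss {L W : Type*} (Λ : L → W → ℝ≥0∞)
    (α : ℝ≥0∞ → ℝ≥0∞) (l₀ : L) (l' l : L) : ℝ≥0∞ :=
  if l = l' then 0
  else if l' = l₀ then ⊤
  else sSup ({x | ∃ w, α (Λ l w) ≤ Λ l' w ∧ x = Λ l' w} ∪ {0})

/-- The `α`-insertion radius `λ^α` of `l ∈ L` with respect to a total order
on `L` with minimal element `l₀`. -/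
noncomputable def insertionRadius {L W : Type*} [LinearOrder L]
    (Λ : L → W → ℝ≥0∞) (α : ℝ≥0∞ → ℝ≥0∞) (l₀ : L) (l : L) : ℝ≥0∞ :=
  if l = l₀ then ⊤
  else ⨆ k, ⨆ (_ : l ≤ k), ⨅ l', ⨅ (_ : l' < l), coverDiss Λ α l₀ l' k

/-!
Among the `l'` with `Λ l' w < α t` whenever `Λ l w < t` (a set containing `l`, as `t ≤ α t`),
take the least one. Every `l'' < l'` fails this at some `w₀` with `Λ l w₀ < t`, so
`α (Λ l w₀) ≤ α t ≤ Λ l'' w₀` and `w₀` witnesses `α t ≤ Λ^α(l'', l)`. Taking `k = l` in the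
supremum defining `λ^α(l')` gives `α t ≤ λ^α(l')`.
-/

section

variable {L W : Type*} {Λ : L → W → ℝ≥0∞} {α : ℝ≥0∞ → ℝ≥0∞} {l₀ : L}

theorem le_coverDiss {l' l : L} {w : W} (hne : l ≠ l') (hw : α (Λ l w) ≤ Λ l' w) :
    Λ l' w ≤ coverDiss Λ α l₀ l' l := by
  rw [coverDiss, if_neg hne]
  split_ifs
  · exact le_top
  · exact le_sSup (Or.inl ⟨w, hw, rfl⟩)

theorem le_insertionRadius [LinearOrder L] {l k : L} {c : ℝ≥0∞} (hlk : l ≤ k)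
    (hc : ∀ l' < l, c ≤ coverDiss Λ α l₀ l' k) : c ≤ insertionRadius Λ α l₀ l := by
  rw [insertionRadius]
  split_ifs
  · exact le_top
  · exact le_iSup₂_of_le k hlk (le_iInf₂ hc)

end

theorem insertionRadius_isTruncation_general {L W : Type*} [Fintype L] [LinearOrder L]
    (Λ : L → W → ℝ≥0∞) (α : ℝ≥0∞ → ℝ≥0∞) (hmono : Monotone α)
    (hα : ∀ t, t ≤ α t) (l₀ : L)
    (t : ℝ≥0∞) (l : L) :
    ∃ l', ∀ w, Λ l w < t →
      Λ l' w < α t ∧ Λ l' w < insertionRadius Λ α l₀ l' := by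
  obtain ⟨l', hl'good, hmin⟩ := wellFounded_lt.has_min
    {l' | ∀ w, Λ l w < t → Λ l' w < α t} ⟨l, fun w hw => hw.trans_le (hα t)⟩
  have hl'l : l' ≤ l := not_lt.mp (hmin l fun w hw => hw.trans_le (hα t))
  refine ⟨l', fun w hw => ⟨hl'good w hw, (hl'good w hw).trans_le ?_⟩⟩
  refine le_insertionRadius hl'l fun l'' hl'' => ?_
  obtain ⟨w₀, hw₀, hle⟩ : ∃ w₀, Λ l w₀ < t ∧ α t ≤ Λ l'' w₀ := by
    simpa using mt (hmin l'') (not_not.mpr hl'')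
  exact hle.trans (le_coverDiss (hl''.trans_le hl'l).ne' ((hmono hw₀.le).trans hle))

/-- for `L` finite, the `α`-insertion radius `λ^α` is an
`α`-truncation function for `Λ`. -/
theorem insertionRadius_isTruncation {L W : Type*} [Fintype L] [LinearOrder L]
    (Λ : L → W → ℝ≥0∞) (α : ℝ≥0∞ → ℝ≥0∞) (hmono : Monotone α)
    (hα : ∀ t, t ≤ α t) (l₀ : L) (hl₀ : ∀ l, l₀ ≤ l)
    (t : ℝ≥0∞) (l : L) :
    ∃ l', ∀ w, Λ l w < t →
      Λ l' w < α t ∧ Λ l' w < insertionRadius Λ α l₀ l' :=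
  insertionRadius_isTruncation_general Λ α hmono hα l₀ t l
end

section
/- Let Λ : L × W → [0,∞] be a dissimilarity with L finite and let φ : L → L be a parent function. Then the (Λ,φ)-restriction R(Λ,φ) : L → [0,∞] is a restriction function for Λ relative to φ: (1) for all (l,w) ∈ L × W with Λ(l,w) < Λ(φ(l),w) one has Λ(φ(l),w) ≤ R(Λ,φ)(l); (2) R(Λ,φ)(φ(l)) ≥ R(Λ,φ)(l) for every l ∈ L; and (3) if φ(l) = l then R(Λ,φ)(l) = ∞. -/
open scoped ENNReal Classical

/-- `φ : L → L` is a parent function: `φⁿ(l) = l` for some `n > 0` implies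
`φ(l) = l`. -/
def IsParent {L : Type*} (φ : L → L) : Prop :=
  ∀ (l : L) (n : ℕ), 0 < n → φ^[n] l = l → φ l = l

/-- `ρ(l,l') = sup P(l,l')` if `P(l,l') = { Λ(l',w) : Λ(l,w) < Λ(l',w) }` is
nonempty and `0` otherwise. -/
noncomputable def rho {L W : Type*} (Λ : L → W → ℝ≥0∞) (l l' : L) : ℝ≥0∞ :=
  if {x | ∃ w, Λ l w < Λ l' w ∧ x = Λ l' w}.Nonempty
  then sSup {x | ∃ w, Λ l w < Λ l' w ∧ x = Λ l' w}
  else 0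

/-- The auxiliary function `R'` of the `(Λ,φ)`-restriction. -/
noncomputable def Raux {L W : Type*} (Λ : L → W → ℝ≥0∞) (φ : L → L) (l : L) :
    ℝ≥0∞ :=
  if φ l = l then ⊤ else rho Λ l (φ l)

/-- The `(Λ,φ)`-restriction: the maximum of `R'` over the descendants of `l`. -/
noncomputable def canonicalRestriction {L W : Type*} (Λ : L → W → ℝ≥0∞)
    (φ : L → L) (l : L) : ℝ≥0∞ :=
  ⨆ (l' : L) (_ : ∃ m : ℕ, φ^[m] l' = l), Raux Λ φ l'

/-- `R` is a restriction function for `Λ` relative to `φ`. -/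
def IsRestriction {L W : Type*} (Λ : L → W → ℝ≥0∞) (φ : L → L)
    (R : L → ℝ≥0∞) : Prop :=
  (∀ (l : L) (w : W), Λ l w < Λ (φ l) w → Λ (φ l) w ≤ R l) ∧
  (∀ l : L, R l ≤ R (φ l)) ∧
  (∀ l : L, φ l = l → R l = ⊤)

theorem le_rho {L W : Type*} {Λ : L → W → ℝ≥0∞} {l l' : L} {w : W}
    (hw : Λ l w < Λ l' w) : Λ l' w ≤ rho Λ l l' := by
  rw [rho, if_pos ⟨Λ l' w, w, hw, rfl⟩]
  exact le_sSup ⟨w, hw, rfl⟩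

theorem Raux_of_isFixedPt {L W : Type*} (Λ : L → W → ℝ≥0∞) {φ : L → L} {l : L}
    (hl : φ l = l) : Raux Λ φ l = ⊤ :=
  if_pos hl

theorem le_Raux {L W : Type*} {Λ : L → W → ℝ≥0∞} {φ : L → L} {l : L} {w : W}
    (hw : Λ l w < Λ (φ l) w) : Λ (φ l) w ≤ Raux Λ φ l := by
  by_cases hl : φ l = l
  · simp only [Raux_of_isFixedPt Λ hl, le_top]
  · rw [Raux, if_neg hl]
    exact le_rho hw

theorem Raux_le_canonicalRestriction_of_iterate {L W : Type*} (Λ : L → W → ℝ≥0∞)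
    {φ : L → L} {l l' : L} {m : ℕ} (h : φ^[m] l' = l) :
    Raux Λ φ l' ≤ canonicalRestriction Λ φ l :=
  le_iSup₂_of_le l' ⟨m, h⟩ le_rfl

theorem Raux_le_canonicalRestriction {L W : Type*} (Λ : L → W → ℝ≥0∞) (φ : L → L)
    (l : L) : Raux Λ φ l ≤ canonicalRestriction Λ φ l :=
  Raux_le_canonicalRestriction_of_iterate Λ (m := 0) rfl

theorem canonicalRestriction_le_apply_parent {L W : Type*} (Λ : L → W → ℝ≥0∞)
    (φ : L → L) (l : L) : canonicalRestriction Λ φ l ≤ canonicalRestriction Λ φ (φ l) :=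
  iSup₂_le fun _ ⟨m, hm⟩ =>
    Raux_le_canonicalRestriction_of_iterate Λ (m := m + 1) <| by
      rw [Function.iterate_succ_apply', hm]

theorem canonicalRestriction_isRestriction_general {L W : Type*}
    (Λ : L → W → ℝ≥0∞) (φ : L → L) :
    IsRestriction Λ φ (canonicalRestriction Λ φ) :=
  ⟨fun l _ hw => (le_Raux hw).trans (Raux_le_canonicalRestriction Λ φ l),
    canonicalRestriction_le_apply_parent Λ φ,
    fun l hl => top_unique <|
      (Raux_of_isFixedPt Λ hl).symm.le.trans (Raux_le_canonicalRestriction Λ φ l)⟩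

/-- for `L` finite and `φ` a parent function, the
`(Λ,φ)`-restriction is a restriction function for `Λ` relative to `φ`. -/
theorem canonicalRestriction_isRestriction {L W : Type*} [Fintype L]
    (Λ : L → W → ℝ≥0∞) (φ : L → L) (hφ : IsParent φ) :
    IsRestriction Λ φ (canonicalRestriction Λ φ) :=
  canonicalRestriction_isRestriction_general Λ φ
end

section
/- Let Λ : L × W → [0,∞] be a dissimilarity with L finite and let φ : L → L be a parent function. Then the (Λ,φ)-restriction R(Λ,φ) is the minimal restriction function for Λ relative to φ: if R is any restriction function for Λ relative to φ, then R(Λ,φ)(l) ≤ R(l) for every l ∈ L. -/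
open scoped ENNReal Classical

theorem rho_le {L W : Type*} {Λ : L → W → ℝ≥0∞} {l l' : L} {c : ℝ≥0∞}
    (h : ∀ w, Λ l w < Λ l' w → Λ l' w ≤ c) : rho Λ l l' ≤ c := by
  unfold rho
  split_ifs
  · exact sSup_le fun x ⟨w, hw, hx⟩ => hx ▸ h w hw
  · exact zero_le

namespace IsRestriction

variable {L W : Type*} {Λ : L → W → ℝ≥0∞} {φ : L → L} {R : L → ℝ≥0∞}

theorem le_iterate (hR : IsRestriction Λ φ R) (l : L) (m : ℕ) : R l ≤ R (φ^[m] l) := by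
  induction m with
  | zero => rfl
  | succ m ih => exact ih.trans (Function.iterate_succ_apply' φ m l ▸ hR.2.1 _)

theorem raux_le (hR : IsRestriction Λ φ R) (l : L) : Raux Λ φ l ≤ R l := by
  unfold Raux
  split_ifs with hfix
  · rw [hR.2.2 l hfix]
  · exact rho_le (hR.1 l)

end IsRestriction

theorem canonicalRestriction_minimal_general {L W : Type*}
    (Λ : L → W → ℝ≥0∞) (φ : L → L)
    (R : L → ℝ≥0∞) (hR : IsRestriction Λ φ R) :
    ∀ l : L, canonicalRestriction Λ φ l ≤ R l := by
  intro l
  refine iSup₂_le fun l' ⟨m, hm⟩ => ?_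
  calc Raux Λ φ l' ≤ R l' := hR.raux_le l'
    _ ≤ R l := hm ▸ hR.le_iterate l' m

/-- for `L` finite and `φ` a parent function, the
`(Λ,φ)`-restriction is the minimal restriction function for `Λ` relative
to `φ`. -/
theorem canonicalRestriction_minimal {L W : Type*} [Fintype L]
    (Λ : L → W → ℝ≥0∞) (φ : L → L) (hφ : IsParent φ)
    (R : L → ℝ≥0∞) (hR : IsRestriction Λ φ R) :
    ∀ l : L, canonicalRestriction Λ φ l ≤ R l :=
  canonicalRestriction_minimal_general Λ φ R hR
end

section
/- Let Λ : L × W → [0,∞] be a dissimilarity, let φ : L → L be a parent function, and let R be a restriction function for Λ relative to φ. Let t ∈ [0,∞], let l_n ∈ L satisfy R(l_n) < t, and define f : L → L by f(l_n) = φ(l_n) and f(l) = l for l ≠ l_n. Then for every finite σ ⊆ L and every w ∈ W with Λ(l,w) < t for all l ∈ σ, one has Λ(l,w) < t for all l ∈ σ ∪ f(σ); in particular σ ∈ NΛ_t implies σ ∪ f(σ) ∈ NΛ_t. -/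
open scoped ENNReal Classical

/-- Either `Λ` does not increase from `l` to `φ l`, or it does and is then bounded by `R l`. -/
theorem IsRestriction.apply_parent_lt {L W : Type*} {Λ : L → W → ℝ≥0∞} {φ : L → L}
    {R : L → ℝ≥0∞} (hR : IsRestriction Λ φ R) {l : L} {w : W} {t : ℝ≥0∞} (hl : R l < t)
    (hlw : Λ l w < t) : Λ (φ l) w < t := by
  rcases lt_or_ge (Λ l w) (Λ (φ l) w) with hlt | hle
  · exact (hR.1 l w hlt).trans_lt hl
  · exact hle.trans_lt hlw

theorem Finset.forall_mem_union_image {α : Type*} {s : Finset α} {f : α → α} {p : α → Prop}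
    (hs : ∀ a ∈ s, p a) (hf : ∀ a ∈ s, p a → p (f a)) : ∀ a ∈ s ∪ s.image f, p a :=
  Finset.forall_mem_union.2 ⟨hs, Finset.forall_mem_image.2 fun a ha => hf a ha (hs a ha)⟩

theorem union_image_mem_nerve_general {L W : Type*} (Λ : L → W → ℝ≥0∞)
    (φ : L → L) (R : L → ℝ≥0∞)
    (hR : IsRestriction Λ φ R) (t : ℝ≥0∞) (lₙ : L) (hlₙ : R lₙ < t)
    (f : L → L) (hf : f = fun l => if l = lₙ then φ lₙ else l) :
    (∀ (σ : Finset L) (w : W), (∀ l ∈ σ, Λ l w < t) →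
      ∀ l ∈ σ ∪ σ.image f, Λ l w < t) ∧
    (∀ σ : Finset L, InNerve Λ t σ → InNerve Λ t (σ ∪ σ.image f)) := by
  have hf_lt : ∀ (l : L) (w : W), Λ l w < t → Λ (f l) w < t := by
    intro l w hlw
    simp only [hf]
    split_ifs with hl
    · subst hl
      exact hR.apply_parent_lt hlₙ hlw
    · exact hlw
  have witness : ∀ (σ : Finset L) (w : W), (∀ l ∈ σ, Λ l w < t) →
      ∀ l ∈ σ ∪ σ.image f, Λ l w < t := fun σ w hw =>
    Finset.forall_mem_union_image hw fun l _ => hf_lt l w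
  exact ⟨witness, fun σ ⟨w, hw⟩ => ⟨w, witness σ w hw⟩⟩

/-- with `f` sending `lₙ` to `φ(lₙ)` and fixing everything
else, if `R(lₙ) < t` then any witness `w` for `σ ∈ NΛ_t` also witnesses
`σ ∪ f(σ) ∈ NΛ_t`; in particular `σ ∈ NΛ_t` implies `σ ∪ f(σ) ∈ NΛ_t`. -/
theorem union_image_mem_nerve {L W : Type*} (Λ : L → W → ℝ≥0∞)
    (φ : L → L) (hφ : IsParent φ) (R : L → ℝ≥0∞)
    (hR : IsRestriction Λ φ R) (t : ℝ≥0∞) (lₙ : L) (hlₙ : R lₙ < t)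
    (f : L → L) (hf : f = fun l => if l = lₙ then φ lₙ else l) :
    (∀ (σ : Finset L) (w : W), (∀ l ∈ σ, Λ l w < t) →
      ∀ l ∈ σ ∪ σ.image f, Λ l w < t) ∧
    (∀ σ : Finset L, InNerve Λ t σ → InNerve Λ t (σ ∪ σ.image f)) :=
  union_image_mem_nerve_general Λ φ R hR t lₙ hlₙ f hf
end

section
/- Let Λ : L × W → [0,∞] be a dissimilarity, let φ : L → L be a parent function, and let R be a restriction function for Λ relative to φ. Let t ∈ [0,∞], and let l_n ∈ L satisfy R(l_n) < t and R(l_n) ≤ R(l) for all l ∈ L. Define f : L → L by f(l_n) = φ(l_n) and f(l) = l for l ≠ l_n. Then for every finite σ ⊆ L with σ ∈ N(Λ,R,φ)(t), the union σ ∪ f(σ) also belongs to N(Λ,R,φ)(t). -/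
/-! If `lₙ ∈ σ`, then `σ ∪ f(σ) = σ ∪ {φ(lₙ)}`, and the witness `w` of `σ` also witnesses the
enlarged simplex: the restriction axiom gives `Λ(φ(lₙ), w) ≤ R(lₙ)`, which is below `t` and below
every value of `R` by minimality; and `φ(lₙ)` is never a slope point since `R(lₙ) ≤ R(φ(lₙ))`. -/

open scoped ENNReal Classical

/-- `l` is a slope point: `R(l) < R(l')` for every `l' ∈ φ⁻¹(l)`. -/
def IsSlopePoint {L : Type*} (R : L → ℝ≥0∞) (φ : L → L) (l : L) : Prop :=
  ∀ l', φ l' = l → R l < R l'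

/-- `σ` is a simplex of the `(R,φ)`-nerve `N(Λ,R,φ)(t)`. -/
def InSparseNerve {L W : Type*} (Λ : L → W → ℝ≥0∞) (R : L → ℝ≥0∞)
    (φ : L → L) (t : ℝ≥0∞) (σ : Finset L) : Prop :=
  InNerve Λ t σ ∧
    ∃ w, (∀ l ∈ σ, Λ l w < t) ∧
      (∀ l ∈ σ, ∀ l' ∈ σ, Λ l w ≤ R l') ∧
      (∀ l ∈ σ, IsSlopePoint R φ l → Λ l w < R l)

namespace IsRestriction

variable {L W : Type*} {Λ : L → W → ℝ≥0∞} {φ : L → L} {R : L → ℝ≥0∞}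

theorem apply_parent_le (hR : IsRestriction Λ φ R) {l : L} {w : W} (h : Λ l w ≤ R l) :
    Λ (φ l) w ≤ R l := by
  by_cases hlt : Λ l w < Λ (φ l) w
  · exact hR.1 l w hlt
  · exact (not_lt.1 hlt).trans h

theorem not_isSlopePoint_parent (hR : IsRestriction Λ φ R) (l : L) :
    ¬ IsSlopePoint R φ (φ l) :=
  fun hs => (hs l rfl).not_ge (hR.2.1 l)

end IsRestriction

theorem InSparseNerve.insert_parent {L W : Type*} {Λ : L → W → ℝ≥0∞} {φ : L → L}
    {R : L → ℝ≥0∞} {t : ℝ≥0∞} {σ : Finset L} {l : L} (hR : IsRestriction Λ φ R)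
    (hlt : R l < t) (hmin : ∀ l', R l ≤ R l') (hl : l ∈ σ) (hσ : InSparseNerve Λ R φ t σ) :
    InSparseNerve Λ R φ t (insert (φ l) σ) := by
  obtain ⟨-, w, hwt, hwR, hslope⟩ := hσ
  have hparent : Λ (φ l) w ≤ R l := hR.apply_parent_le (hwR l hl l hl)
  have hwt' : ∀ x ∈ insert (φ l) σ, Λ x w < t :=
    Finset.forall_mem_insert _ _ _ |>.2 ⟨hparent.trans_lt hlt, hwt⟩
  refine ⟨⟨w, hwt'⟩, w, hwt', ?_, ?_⟩
  · simp only [Finset.forall_mem_insert]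
    exact ⟨⟨hparent.trans (hR.2.1 l), fun x' _ => hparent.trans (hmin x')⟩,
      fun x hx => ⟨(hwR x hx l hl).trans (hR.2.1 l), hwR x hx⟩⟩
  · simp only [Finset.forall_mem_insert]
    exact ⟨fun hs => absurd hs (hR.not_isSlopePoint_parent l), hslope⟩

theorem Finset.union_image_ite_eq {α : Type*} [DecidableEq α] (σ : Finset α) (a b : α) :
    σ ∪ σ.image (fun x => if x = a then b else x) = if a ∈ σ then insert b σ else σ := by
  ext x
  simp only [Finset.mem_union, Finset.mem_image]
  split_ifs with ha
  · rw [Finset.mem_insert]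
    constructor
    · rintro (hx | ⟨y, hy, rfl⟩)
      · exact Or.inr hx
      · split_ifs
        · exact Or.inl rfl
        · exact Or.inr hy
    · rintro (rfl | hx)
      · exact Or.inr ⟨a, ha, if_pos rfl⟩
      · exact Or.inl hx
  · constructor
    · rintro (hx | ⟨y, hy, rfl⟩)
      · exact hx
      · rwa [if_neg (ne_of_mem_of_not_mem hy ha)]
    · exact Or.inl

theorem union_image_mem_sparseNerve_general {L W : Type*} (Λ : L → W → ℝ≥0∞)
    (φ : L → L) (R : L → ℝ≥0∞)
    (hR : IsRestriction Λ φ R) (t : ℝ≥0∞) (lₙ : L)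
    (hlₙ : R lₙ < t) (hmin : ∀ l : L, R lₙ ≤ R l)
    (f : L → L) (hf : f = fun l => if l = lₙ then φ lₙ else l) :
    ∀ σ : Finset L, InSparseNerve Λ R φ t σ →
      InSparseNerve Λ R φ t (σ ∪ σ.image f) := by
  intro σ hσ
  rw [hf, Finset.union_image_ite_eq]
  split_ifs with hmem
  · exact hσ.insert_parent hR hlₙ hmin hmem
  · exact hσ

/-- if `R(lₙ) < t` and `R(lₙ) ≤ R(l)` for all `l`, and `f`
sends `lₙ` to `φ(lₙ)` fixing everything else, then `σ ∈ N(Λ,R,φ)(t)`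
implies `σ ∪ f(σ) ∈ N(Λ,R,φ)(t)`. -/
theorem union_image_mem_sparseNerve {L W : Type*} (Λ : L → W → ℝ≥0∞)
    (φ : L → L) (hφ : IsParent φ) (R : L → ℝ≥0∞)
    (hR : IsRestriction Λ φ R) (t : ℝ≥0∞) (lₙ : L)
    (hlₙ : R lₙ < t) (hmin : ∀ l : L, R lₙ ≤ R l)
    (f : L → L) (hf : f = fun l => if l = lₙ then φ lₙ else l) :
    ∀ σ : Finset L, InSparseNerve Λ R φ t σ →
      InSparseNerve Λ R φ t (σ ∪ σ.image f) :=
  union_image_mem_sparseNerve_general Λ φ R hR t lₙ hlₙ hmin f hf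
end
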